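/- Let n₁ > n₂ ≥ 1 be natural numbers and n = n₁ + n₂. For all real p, q with -1/n < p < 0 and -1/n < q < 0 satisfying the constraint (n₁ - n₂)² = (1+np)(1+nq)/(pq), one has 1 + p + q ≥ (n₁ - 1)/n₁, with equality when p = q = -1/(2n₁). -/

import Mathlib

/-!
Write `N = a + b` and `t = p q > 0`. The constraint `(a - b)² t = (1 + N p)(1 + N q)` is linear in
`s = p + q`: it says `N s = -(1 + 4 a b t)`. Since `s² ≥ 4 t`, this gives
`(1 - 4 a² t)(1 - 4 b² t) = (N (p - q))² ≥ 0`, and the lower bounds on `p, q` give `N² t < 1`, hence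
`4 b² t < 1` and so `4 a² t ≤ 1`. Finally `N (a s + 1) = b (1 - 4 a² t) ≥ 0`, i.e. `1 + s ≥ (a - 1) / a`.
-/

section Constraint

variable {a b p q : ℝ}

lemma add_mul_add_eq_of_constraint
    (h : (a - b) ^ 2 * (p * q) = (1 + (a + b) * p) * (1 + (a + b) * q)) :
    (a + b) * (p + q) = -(1 + 4 * a * b * (p * q)) := by
  linear_combination -h

lemma one_sub_mul_one_sub_eq_sq_of_constraint
    (h : (a - b) ^ 2 * (p * q) = (1 + (a + b) * p) * (1 + (a + b) * q)) :
    (1 - 4 * a ^ 2 * (p * q)) * (1 - 4 * b ^ 2 * (p * q)) = ((a + b) * (p - q)) ^ 2 := by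
  linear_combination
    (-((a + b) * (p + q) - (1 + 4 * a * b * (p * q)))) * add_mul_add_eq_of_constraint h

lemma sq_mul_mul_lt_one {N : ℝ} (hN : 0 < N) (hp : -1 / N < p)
    (hq : -1 / N < q) (hq0 : q < 0) : N ^ 2 * (p * q) < 1 := by
  have hNp : -1 < N * p := by rwa [div_lt_iff₀' hN] at hp
  have hNq : -1 < N * q := by rwa [div_lt_iff₀' hN] at hq
  nlinarith [mul_neg_of_pos_of_neg hN hq0]

theorem div_le_one_add_add_of_constraint (hb : 0 ≤ b) (hab : b < a)
    (hp : -1 / (a + b) < p) (hp0 : p < 0) (hq : -1 / (a + b) < q) (hq0 : q < 0)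
    (h : (a - b) ^ 2 = (1 + (a + b) * p) * (1 + (a + b) * q) / (p * q)) :
    (a - 1) / a ≤ 1 + p + q := by
  have ha : 0 < a := hb.trans_lt hab
  have ht : 0 < p * q := mul_pos_of_neg_of_neg hp0 hq0
  have hc : (a - b) ^ 2 * (p * q) = (1 + (a + b) * p) * (1 + (a + b) * q) := by
    rwa [eq_div_iff ht.ne'] at h
  have hNt : (a + b) ^ 2 * (p * q) < 1 := sq_mul_mul_lt_one (by linarith) hp hq hq0
  have hbt : 4 * b ^ 2 * (p * q) < 1 := by
    have : 4 * b ^ 2 ≤ (a + b) ^ 2 := by nlinarith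
    nlinarith
  have hat : 4 * a ^ 2 * (p * q) ≤ 1 := by
    have := one_sub_mul_one_sub_eq_sq_of_constraint hc
    nlinarith [sq_nonneg ((a + b) * (p - q))]
  have hs : (a + b) * (a * (p + q) + 1) = b * (1 - 4 * a ^ 2 * (p * q)) := by
    linear_combination a * add_mul_add_eq_of_constraint hc
  have : 0 ≤ a * (p + q) + 1 := by
    rw [← mul_nonneg_iff_of_pos_left (by linarith : 0 < a + b), hs]
    exact mul_nonneg hb (by linarith)
  rw [div_le_iff₀ ha]
  linarith

end Constraint

theorem stmt_9_general (n₁ n₂ : ℕ) (h₁ : n₂ < n₁) (n : ℕ) (hn : n = n₁ + n₂) :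
    (∀ p q : ℝ, -1 / (n : ℝ) < p → p < 0 → -1 / (n : ℝ) < q → q < 0 →
      ((n₁ : ℝ) - (n₂ : ℝ)) ^ 2 = (1 + (n : ℝ) * p) * (1 + (n : ℝ) * q) / (p * q) →
      1 + p + q ≥ ((n₁ : ℝ) - 1) / (n₁ : ℝ)) ∧
    (1 + (-1 / (2 * (n₁ : ℝ))) + (-1 / (2 * (n₁ : ℝ))) = ((n₁ : ℝ) - 1) / (n₁ : ℝ)) := by
  subst hn
  have hab : (n₂ : ℝ) < n₁ := by exact_mod_cast h₁
  refine ⟨fun p q hp hp0 hq hq0 h => ?_, ?_⟩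
  · push_cast at hp hq h
    exact div_le_one_add_add_of_constraint (Nat.cast_nonneg _) hab hp hp0 hq hq0 h
  · have : (n₁ : ℝ) ≠ 0 := ((Nat.cast_nonneg _).trans_lt hab).ne'
    field_simp
    ring

theorem stmt_9 (n₁ n₂ : ℕ) (h₂ : 1 ≤ n₂) (h₁ : n₂ < n₁) (n : ℕ) (hn : n = n₁ + n₂) :
    (∀ p q : ℝ, -1 / (n : ℝ) < p → p < 0 → -1 / (n : ℝ) < q → q < 0 →
      ((n₁ : ℝ) - (n₂ : ℝ)) ^ 2 = (1 + (n : ℝ) * p) * (1 + (n : ℝ) * q) / (p * q) →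
      1 + p + q ≥ ((n₁ : ℝ) - 1) / (n₁ : ℝ)) ∧
    (1 + (-1 / (2 * (n₁ : ℝ))) + (-1 / (2 * (n₁ : ℝ))) = ((n₁ : ℝ) - 1) / (n₁ : ℝ)) :=
  stmt_9_general n₁ n₂ h₁ n hn
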